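/- Let n and d be integers with 1 ≤ d < n and let Δ be a pure (d−1)-dimensional simplicial complex on [n]. Then Δ is an f-simplicial complex if and only if Δ^c is an f-simplicial complex. -/

import Mathlib

/-
Complementation `A ↦ Aᶜ` matches the `k`-sets containing no facet of `Δ` with the
`(n - k)`-sets outside `Δ^c`, so `Δ` is an `f`-complex exactly when
`f_k(Δ) + f_{n-k}(Δ^c) = C(n, k)` for all `k ≤ n`. This condition is symmetric under
`Δ ↔ Δ^c` because `(Δ^c)^c = Δ`: the facets of `Δ^c` are precisely the complements of
the facets of `Δ`, since facets form an antichain.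
-/

open Finset

/-- `Δ`, given as the finset of its faces, is a simplicial complex on the vertex
set `Fin n`: a nonempty collection of subsets closed under taking subsets. -/
def IsComplex {n : ℕ} (Δ : Finset (Finset (Fin n))) : Prop :=
  Δ.Nonempty ∧ ∀ A ∈ Δ, ∀ B ⊆ A, B ∈ Δ

/-- The facets (maximal faces) of `Δ`. -/
def facets {n : ℕ} (Δ : Finset (Finset (Fin n))) : Finset (Finset (Fin n)) :=
  Δ.filter fun F => ∀ G ∈ Δ, F ⊆ G → F = G

/-- The simplicial complex generated by a family `𝔉`: all subsets of members of `𝔉`. -/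
def generated {n : ℕ} (𝔉 : Finset (Finset (Fin n))) : Finset (Finset (Fin n)) :=
  univ.filter fun A => ∃ F ∈ 𝔉, A ⊆ F

/-- The Newton complement dual `Δ^c`: the complex generated by the complements
of the facets of `Δ`. -/
def cdual {n : ℕ} (Δ : Finset (Finset (Fin n))) : Finset (Finset (Fin n)) :=
  generated ((facets Δ).image fun F => Fᶜ)

/-- The nonface complex of `Δ`: all subsets of `[n]` containing no facet of `Δ`. -/
def nonfaceComplex {n : ℕ} (Δ : Finset (Finset (Fin n))) : Finset (Finset (Fin n)) :=
  univ.filter fun A => ∀ F ∈ facets Δ, ¬ F ⊆ A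

/-- `Δ` is an `f`-simplicial complex: for every `k`, `Δ` and its nonface complex
have the same number of `k`-element members (the same `f`-vector). -/
def IsFComplex {n : ℕ} (Δ : Finset (Finset (Fin n))) : Prop :=
  ∀ k : ℕ, (Δ.filter fun A => A.card = k).card =
    ((nonfaceComplex Δ).filter fun A => A.card = k).card

/-- `Δ` is pure `(d-1)`-dimensional: every facet has exactly `d` elements. -/
def PureDim {n : ℕ} (d : ℕ) (Δ : Finset (Finset (Fin n))) : Prop :=
  ∀ F ∈ facets Δ, F.card = d

/-- The minimal nonfaces of `Δ`: sets that are not faces but all of whose proper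
subsets are faces. -/
def minNonfaces {n : ℕ} (Δ : Finset (Finset (Fin n))) : Finset (Finset (Fin n)) :=
  univ.filter fun A => A ∉ Δ ∧ ∀ B ⊂ A, B ∈ Δ

/-- The Alexander dual `Δ^∨`: the complex whose facets are the complements of the
minimal nonfaces of `Δ`. -/
def adual {n : ℕ} (Δ : Finset (Finset (Fin n))) : Finset (Finset (Fin n)) :=
  generated ((minNonfaces Δ).image fun F => Fᶜ)

/-- The homogeneous complement `Δ'` (in degree `e`): the complex generated by the
`e`-element subsets of `[n]` that are not facets of `Δ`. -/
def hcompl {n : ℕ} (e : ℕ) (Δ : Finset (Finset (Fin n))) : Finset (Finset (Fin n)) :=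
  generated (univ.filter fun A : Finset (Fin n) => A.card = e ∧ A ∉ facets Δ)

variable {n : ℕ} {Δ : Finset (Finset (Fin n))} {A F G : Finset (Fin n)}

@[simp]
lemma mem_generated {𝔉 : Finset (Finset (Fin n))} : A ∈ generated 𝔉 ↔ ∃ F ∈ 𝔉, A ⊆ F := by
  simp [generated]

lemma mem_facets : F ∈ facets Δ ↔ F ∈ Δ ∧ ∀ G ∈ Δ, F ⊆ G → F = G :=
  mem_filter

@[simp]
lemma mem_cdual : A ∈ cdual Δ ↔ ∃ F ∈ facets Δ, A ⊆ Fᶜ := by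
  rw [cdual, mem_generated, exists_mem_image]

lemma eq_of_mem_facets_of_subset (hF : F ∈ facets Δ) (hG : G ∈ facets Δ) (h : F ⊆ G) :
    F = G :=
  (mem_facets.1 hF).2 G (mem_facets.1 hG).1 h

lemma exists_mem_facets_superset (hA : A ∈ Δ) : ∃ F ∈ facets Δ, A ⊆ F := by
  obtain ⟨F, hF, hmax⟩ := exists_max_image {G ∈ Δ | A ⊆ G} card ⟨A, mem_filter.2 ⟨hA, le_rfl⟩⟩
  rw [mem_filter] at hF
  refine ⟨F, mem_facets.2 ⟨hF.1, fun G hG hFG => ?_⟩, hF.2⟩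
  exact eq_of_subset_of_card_le hFG (hmax G (mem_filter.2 ⟨hG, hF.2.trans hFG⟩))

lemma facets_cdual (Δ : Finset (Finset (Fin n))) :
    facets (cdual Δ) = (facets Δ).image compl := by
  have compl_mem_cdual {F} (hF : F ∈ facets Δ) : Fᶜ ∈ cdual Δ := mem_cdual.2 ⟨F, hF, subset_rfl⟩
  ext G
  simp only [mem_image, mem_facets (Δ := cdual Δ)]
  constructor
  · rintro ⟨hG, hmax⟩
    obtain ⟨F, hF, hGF⟩ := mem_cdual.1 hG
    exact ⟨F, hF, (hmax Fᶜ (compl_mem_cdual hF) hGF).symm⟩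
  · rintro ⟨F, hF, rfl⟩
    refine ⟨compl_mem_cdual hF, fun H hH hFH => ?_⟩
    obtain ⟨F', hF', hHF'⟩ := mem_cdual.1 hH
    obtain rfl : F' = F :=
      eq_of_mem_facets_of_subset hF' hF (compl_subset_compl.1 (hFH.trans hHF'))
    exact hFH.antisymm hHF'

lemma generated_facets (hΔ : ∀ A ∈ Δ, ∀ B ⊆ A, B ∈ Δ) : generated (facets Δ) = Δ := by
  ext A
  rw [mem_generated]
  exact ⟨fun ⟨F, hF, hAF⟩ => hΔ F (mem_facets.1 hF).1 A hAF, exists_mem_facets_superset⟩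

lemma cdual_cdual (hΔ : ∀ A ∈ Δ, ∀ B ⊆ A, B ∈ Δ) : cdual (cdual Δ) = Δ := by
  rw [cdual, facets_cdual, image_image, compl_comp_compl, image_id, generated_facets hΔ]

lemma compl_mem_cdual_iff : Aᶜ ∈ cdual Δ ↔ A ∉ nonfaceComplex Δ := by
  simp [nonfaceComplex]

lemma card_compl_eq_sub_card (A : Finset (Fin n)) : #Aᶜ = n - #A := by
  rw [card_compl, Fintype.card_fin]

lemma card_filter_nonfaceComplex (Δ : Finset (Finset (Fin n))) {k : ℕ} (hk : k ≤ n) :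
    #{A ∈ nonfaceComplex Δ | #A = k} = #{B | #B = n - k ∧ B ∉ cdual Δ} := by
  refine card_nbij' compl compl (fun A hA => ?_) (fun B hB => ?_)
    (fun A _ => compl_compl A) (fun B _ => compl_compl B) <;>
    simp only [coe_filter, Set.mem_ofPred_eq, mem_univ, true_and] at *
  · rw [compl_mem_cdual_iff, card_compl_eq_sub_card, hA.2, not_not]
    exact ⟨rfl, hA.1⟩
  · rw [← not_not (a := Bᶜ ∈ nonfaceComplex Δ), ← compl_mem_cdual_iff, compl_compl,
      card_compl_eq_sub_card, hB.1]
    exact ⟨hB.2, by omega⟩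

lemma card_filter_nonfaceComplex_add_card_filter_cdual (Δ : Finset (Finset (Fin n)))
    {k : ℕ} (hk : k ≤ n) :
    #{A ∈ nonfaceComplex Δ | #A = k} + #{B ∈ cdual Δ | #B = n - k} = n.choose k :=
  calc #{A ∈ nonfaceComplex Δ | #A = k} + #{B ∈ cdual Δ | #B = n - k}
      = #{B | #B = n - k ∧ B ∈ cdual Δ} + #{B | #B = n - k ∧ B ∉ cdual Δ} := by
        rw [card_filter_nonfaceComplex Δ hk, add_comm]
        congr 2
        ext B
        simp [and_comm]
    _ = #{B : Finset (Fin n) | #B = n - k} := by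
        rw [← filter_filter, ← filter_filter, card_filter_add_card_filter_not]
    _ = n.choose k := by
        rw [← Fintype.card_subtype, Fintype.card_finset_len, Fintype.card_fin, Nat.choose_symm hk]

lemma filter_card_eq_eq_empty (S : Finset (Finset (Fin n))) {k : ℕ} (hk : n < k) :
    {A ∈ S | #A = k} = ∅ :=
  filter_false_of_mem fun A _ => (card_le_univ A).trans_lt (by rwa [Fintype.card_fin]) |>.ne

lemma isFComplex_iff (Δ : Finset (Finset (Fin n))) :
    IsFComplex Δ ↔
      ∀ k ≤ n, #{A ∈ Δ | #A = k} + #{B ∈ cdual Δ | #B = n - k} = n.choose k := by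
  refine ⟨fun h k hk => h k ▸ card_filter_nonfaceComplex_add_card_filter_cdual Δ hk,
    fun h k => ?_⟩
  rcases le_or_gt k n with hk | hk
  · have := card_filter_nonfaceComplex_add_card_filter_cdual Δ hk
    have := h k hk
    omega
  · rw [filter_card_eq_eq_empty _ hk, filter_card_eq_eq_empty _ hk]

lemma forall_add_sub_eq_choose_comm {f g : ℕ → ℕ} :
    (∀ k ≤ n, f k + g (n - k) = n.choose k) ↔ ∀ k ≤ n, g k + f (n - k) = n.choose k := by
  have key (f g : ℕ → ℕ) (h : ∀ k ≤ n, f k + g (n - k) = n.choose k) (k : ℕ) (hk : k ≤ n) :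
      g k + f (n - k) = n.choose k := by
    rw [add_comm, ← Nat.choose_symm hk, ← h (n - k) (Nat.sub_le n k), Nat.sub_sub_self hk]
  exact ⟨key f g, key g f⟩

theorem stmt1_general {n : ℕ}
    (Δ : Finset (Finset (Fin n))) (hΔ : IsComplex Δ) :
    IsFComplex Δ ↔ IsFComplex (cdual Δ) := by
  rw [isFComplex_iff, isFComplex_iff, cdual_cdual hΔ.2]
  exact forall_add_sub_eq_choose_comm (f := fun k => #{A ∈ Δ | #A = k})
    (g := fun k => #{A ∈ cdual Δ | #A = k})

/-- a pure `(d-1)`-dimensional simplicial complex `Δ` on `[n]` is an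
`f`-simplicial complex iff its Newton complement dual `Δ^c` is. -/
theorem stmt1 {n d : ℕ} (hd : 1 ≤ d) (hdn : d < n)
    (Δ : Finset (Finset (Fin n))) (hΔ : IsComplex Δ) (hpure : PureDim d Δ) :
    IsFComplex Δ ↔ IsFComplex (cdual Δ) :=
  stmt1_general Δ hΔ
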